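/- Let V be a finite-dimensional complex inner product space, let H' and B be self-adjoint linear endomorphisms of V, let M ∈ ℝ be such that every eigenvalue of H' is strictly greater than −M, and let λ > 0. Define H̄' := H'·E^{H'}((−M,M)) + M·E^{H'}([M,∞)) and H̄ := H̄' + B. Assume the complex Hadamard bound: for every s ∈ ℂ with |s| < 2λ, ‖e^{sH'}·B·e^{−sH'}‖ ≤ ‖B‖/(1 − |s|/(2λ)). Then for every linear endomorphism A of V and all M', N' ∈ ℝ: (a) ‖E^{H̄}([M',∞))·A·E^{H̄}((−∞,N'])‖ ≤ exp(−λ(M' − N' − 8‖B‖))·‖e^{λH̄'}·A·e^{−λH̄'}‖, and (b) ‖E^{H̄'}([M',∞))·A·E^{H̄'}((−∞,N'])‖ ≤ exp(−λ(M' − N' − 8‖B‖))·‖e^{λH̄}·A·e^{−λH̄}‖. -/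

import Mathlib

/-- The spectral projection `E^T(I)` of an endomorphism `T` of a finite-dimensional
complex inner product space: the orthogonal projection onto the span of all
eigenvectors of `T` whose eigenvalue lies in `I ⊆ ℝ`. -/
noncomputable def specProj {V : Type*} [NormedAddCommGroup V] [InnerProductSpace ℂ V]
    [FiniteDimensional ℂ V] (T : V →L[ℂ] V) (I : Set ℝ) : V →L[ℂ] V :=
  (⨆ μ ∈ I, Module.End.eigenspace (↑T : V →ₗ[ℂ] V) (μ : ℂ)).subtypeL.comp
    (Submodule.orthogonalProjectionOnto (⨆ μ ∈ I, Module.End.eigenspace (↑T : V →ₗ[ℂ] V) (μ : ℂ)))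

/-- The energy-truncated operator `T̄ := T·E^T((−M,M)) + M·E^T([M,∞))`. -/
noncomputable def etrunc {V : Type*} [NormedAddCommGroup V] [InnerProductSpace ℂ V]
    [FiniteDimensional ℂ V] (T : V →L[ℂ] V) (M : ℝ) : V →L[ℂ] V :=
  T * specProj T (Set.Ioo (-M) M) + (M : ℂ) • specProj T (Set.Ici M)

/-!
Write `X = H̄'` and `Y = H̄ = X + B`. In an eigenbasis of `H'` the truncation `X` acts by
`min μ M`, so `e^{-sX} = e^{-sH'} E((-M,M)) + e^{-sM} E([M,∞))`; together with the Hadamard bound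
at real `s ∈ [0, λ]`, where it reads `‖e^{sH'} B e^{-sH'}‖ ≤ 2‖B‖`, this gives
`‖e^{sX} B e^{-sX}‖ ≤ 3‖B‖`. The interaction-picture propagators `e^{sY} e^{-sX}` and
`e^{sX} e^{-sY}` solve linear ODEs driven by `e^{sX} B e^{-sX}`, so by Grönwall both have norm at
most `e^{3λ‖B‖}`. Finally, for self-adjoint `K` the operator `E^K([M',∞)) A E^K((-∞,N'])` factors
through `e^{λK} A e^{-λK}` with outer factors of norms at most `e^{-λM'}` and `e^{λN'}`; trading
`K` between `X` and `Y` costs the two propagators, and `e^{6λ‖B‖} ≤ e^{8λ‖B‖}`.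
-/

open Set NormedSpace

theorem norm_le_mul_exp_of_hasDerivAt {E : Type*} [NormedAddCommGroup E] [NormedSpace ℝ E]
    {g g' : ℝ → E} {C t : ℝ} (hg : ∀ s, HasDerivAt g (g' s) s)
    (hg' : ∀ s ∈ Ico 0 t, ‖g' s‖ ≤ C * ‖g s‖) (ht : 0 ≤ t) :
    ‖g t‖ ≤ ‖g 0‖ * Real.exp (C * t) := by
  have hcont : ContinuousOn g (Icc 0 t) := fun s _ => (hg s).continuousAt.continuousWithinAt
  simpa [gronwallBound_ε0] using norm_le_gronwallBound_of_norm_deriv_right_le (ε := 0) hcont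
    (fun s _ => (hg s).hasDerivWithinAt) le_rfl (by simpa using hg') t ⟨ht, le_rfl⟩

section BanachAlgebra

variable {𝔸 : Type*} [NormedRing 𝔸]

theorem norm_mul_mul_le_of_mul_eq_one {u v : 𝔸} (hvu : v * u = 1) (P A Q : 𝔸) :
    ‖P * A * Q‖ ≤ ‖P * v‖ * ‖u * A * v‖ * ‖u * Q‖ := by
  have hsplit : P * A * Q = P * v * (u * A * v) * (u * Q) := by
    simp only [mul_assoc, ← mul_assoc v u, hvu, one_mul]
  rw [hsplit]
  exact (norm_mul_le _ _).trans (by gcongr; exact norm_mul_le _ _)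

variable [CompleteSpace 𝔸]

theorem exp_neg_mul_exp [NormedAlgebra ℚ 𝔸] (x : 𝔸) : exp (-x) * exp x = 1 := by
  rw [← exp_add_of_commute (Commute.refl x).neg_left, neg_add_cancel, exp_zero]

variable [NormedAlgebra ℝ 𝔸]

theorem hasDerivAt_exp_smul_mul_exp_neg_smul (X Y : 𝔸) (t : ℝ) :
    HasDerivAt (fun s : ℝ => exp (s • Y) * exp (-(s • X)))
      (exp (t • Y) * (Y - X) * exp (-(t • X))) t := by
  have hX : HasDerivAt (fun s : ℝ => exp (-(s • X))) (-(X * exp (-(t • X)))) t := by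
    simpa only [← smul_neg, mul_neg, neg_mul] using hasDerivAt_exp_smul_const' (-X) t
  refine ((hasDerivAt_exp_smul_const Y t).mul hX).congr_deriv ?_
  noncomm_ring

variable [NormedAlgebra ℚ 𝔸]

theorem hasDerivAt_exp_smul_add_mul_exp_neg_smul (X B : 𝔸) (t : ℝ) :
    HasDerivAt (fun s : ℝ => exp (s • (X + B)) * exp (-(s • X)))
      (exp (t • (X + B)) * exp (-(t • X)) * (exp (t • X) * B * exp (-(t • X)))) t := by
  convert hasDerivAt_exp_smul_mul_exp_neg_smul X (X + B) t using 1
  simp only [add_sub_cancel_left, mul_assoc, ← mul_assoc (exp (-(t • X))) (exp (t • X)),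
    exp_neg_mul_exp, one_mul]

theorem hasDerivAt_exp_smul_mul_exp_neg_smul_add (X B : 𝔸) (t : ℝ) :
    HasDerivAt (fun s : ℝ => exp (s • X) * exp (-(s • (X + B))))
      (-(exp (t • X) * B * exp (-(t • X)) * (exp (t • X) * exp (-(t • (X + B)))))) t := by
  convert hasDerivAt_exp_smul_mul_exp_neg_smul (X + B) X t using 1
  simp only [sub_add_cancel_left, mul_assoc, ← mul_assoc (exp (-(t • X))) (exp (t • X)),
    exp_neg_mul_exp, one_mul]
  noncomm_ring

theorem norm_exp_smul_add_mul_exp_neg_smul_le (h1 : ‖(1 : 𝔸)‖ ≤ 1) {X B : 𝔸} {C t : ℝ}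
    (ht : 0 ≤ t) (hB : ∀ s ∈ Icc 0 t, ‖exp (s • X) * B * exp (-(s • X))‖ ≤ C) :
    ‖exp (t • (X + B)) * exp (-(t • X))‖ ≤ Real.exp (C * t) := by
  refine (norm_le_mul_exp_of_hasDerivAt (C := C) (hasDerivAt_exp_smul_add_mul_exp_neg_smul X B)
    (fun s hs => ?_) ht).trans ?_
  · rw [mul_comm C]
    exact (norm_mul_le _ _).trans (by gcongr; exact hB s (Ico_subset_Icc_self hs))
  · simpa using mul_le_of_le_one_left (Real.exp_pos _).le h1

theorem norm_exp_smul_mul_exp_neg_smul_add_le (h1 : ‖(1 : 𝔸)‖ ≤ 1) {X B : 𝔸} {C t : ℝ}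
    (ht : 0 ≤ t) (hB : ∀ s ∈ Icc 0 t, ‖exp (s • X) * B * exp (-(s • X))‖ ≤ C) :
    ‖exp (t • X) * exp (-(t • (X + B)))‖ ≤ Real.exp (C * t) := by
  refine (norm_le_mul_exp_of_hasDerivAt (C := C) (hasDerivAt_exp_smul_mul_exp_neg_smul_add X B)
    (fun s hs => ?_) ht).trans ?_
  · rw [norm_neg]
    exact (norm_mul_le _ _).trans (by gcongr; exact hB s (Ico_subset_Icc_self hs))
  · simpa using mul_le_of_le_one_left (Real.exp_pos _).le h1

end BanachAlgebra

theorem OrthonormalBasis.ext_continuousLinearMap {𝕜 E ι : Type*} [RCLike 𝕜]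
    [NormedAddCommGroup E] [InnerProductSpace 𝕜 E] [Fintype ι] (b : OrthonormalBasis ι 𝕜 E)
    {S T : E →L[𝕜] E} (h : ∀ i, S (b i) = T (b i)) : S = T :=
  ContinuousLinearMap.coe_injective <| b.toBasis.ext fun i => by simpa using h i

theorem OrthonormalBasis.opNorm_le_of_apply_eq_smul {𝕜 E ι : Type*} [RCLike 𝕜]
    [NormedAddCommGroup E] [InnerProductSpace 𝕜 E] [Fintype ι] (b : OrthonormalBasis ι 𝕜 E)
    {T : E →L[𝕜] E} {c : ι → 𝕜} (hT : ∀ i, T (b i) = c i • b i) {C : ℝ} (hC : 0 ≤ C)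
    (hc : ∀ i, ‖c i‖ ≤ C) : ‖T‖ ≤ C := by
  refine T.opNorm_le_bound hC fun x => ?_
  have hTx : T x = b.repr.symm (WithLp.toLp 2 fun i => c i * b.repr x i) := by
    conv_lhs => rw [← b.sum_repr x]
    simp only [map_sum, map_smul, hT, smul_smul, ← b.sum_repr_symm, mul_comm]
  have hsq : ‖T x‖ ^ 2 ≤ (C * ‖x‖) ^ 2 := by
    rw [hTx, LinearIsometryEquiv.norm_map, mul_pow, ← b.repr.norm_map x,
      EuclideanSpace.norm_sq_eq, EuclideanSpace.norm_sq_eq, Finset.mul_sum]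
    refine Finset.sum_le_sum fun i _ => ?_
    rw [PiLp.toLp_apply, norm_mul, mul_pow]
    gcongr
    exact hc i
  exact (pow_le_pow_iff_left₀ (norm_nonneg _) (by positivity) two_ne_zero).mp hsq

section ComplexOperators

variable {E : Type*} [NormedAddCommGroup E] [NormedSpace ℂ E]

-- Mathlib's lemmas on `exp` are stated for `ℚ`-algebras; instance search does not find this one.
noncomputable instance : NormedAlgebra ℚ (E →L[ℂ] E) :=
  NormedAlgebra.restrictScalars ℚ ℂ _

variable [CompleteSpace E]

theorem ContinuousLinearMap.exp_apply_of_apply_eq_smul {T : E →L[ℂ] E} {v : E} {c : ℂ}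
    (h : T v = c • v) : exp T v = Complex.exp c • v := by
  have hpow : ∀ k : ℕ, (T ^ k) v = c ^ k • v := by
    intro k
    induction k with
    | zero => simp
    | succ k ih => rw [pow_succ', mul_apply_eq_comp, ih, map_smul, h, smul_smul, pow_succ]
  have hT := (apply ℂ E v).hasSum (exp_series_hasSum_exp' (𝕂 := ℂ) T)
  simp only [apply_apply, smul_apply, hpow, smul_smul] at hT
  rw [Complex.exp_eq_exp_ℂ]
  exact hT.unique ((exp_series_hasSum_exp' (𝕂 := ℂ) c).smul_const v)

theorem ContinuousLinearMap.exp_smul_apply_of_apply_eq_smul {T : E →L[ℂ] E} {v : E} {μ : ℝ}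
    (h : T v = (μ : ℂ) • v) (s : ℝ) : exp (s • T) v = (Real.exp (s * μ) : ℂ) • v := by
  rw [Complex.ofReal_exp]
  refine exp_apply_of_apply_eq_smul ?_
  rw [smul_apply, h, ← Complex.coe_smul, smul_smul, Complex.ofReal_mul]

theorem ContinuousLinearMap.exp_neg_smul_apply_of_apply_eq_smul {T : E →L[ℂ] E} {v : E} {μ : ℝ}
    (h : T v = (μ : ℂ) • v) (s : ℝ) : exp (-(s • T)) v = (Real.exp (-(s * μ)) : ℂ) • v := by
  rw [← neg_smul, exp_smul_apply_of_apply_eq_smul h, neg_mul]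

end ComplexOperators

section SpectralProjection

variable {V : Type*} [NormedAddCommGroup V] [InnerProductSpace ℂ V] [FiniteDimensional ℂ V]

theorem specProj_eq_starProjection (T : V →L[ℂ] V) (I : Set ℝ) :
    specProj T I = (⨆ μ ∈ I, Module.End.eigenspace (T : V →ₗ[ℂ] V) (μ : ℂ)).starProjection :=
  rfl

theorem specProj_apply_of_mem {T : V →L[ℂ] V} {I : Set ℝ} {v : V} {μ : ℝ}
    (hv : T v = (μ : ℂ) • v) (hμ : μ ∈ I) : specProj T I v = v := by
  rw [specProj_eq_starProjection, Submodule.starProjection_eq_self_iff]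
  exact Submodule.mem_iSup_of_mem μ (Submodule.mem_iSup_of_mem hμ
    (Module.End.mem_eigenspace_iff.mpr hv))

theorem specProj_apply_of_notMem {T : V →L[ℂ] V} (hT : IsSelfAdjoint T) {I : Set ℝ} {v : V}
    {μ : ℝ} (hv : T v = (μ : ℂ) • v) (hμ : μ ∉ I) : specProj T I v = 0 := by
  have hsym := ContinuousLinearMap.isSelfAdjoint_iff_isSymmetric.mp hT
  rw [specProj_eq_starProjection, Submodule.starProjection_apply_eq_zero_iff]
  refine (Submodule.isOrtho_iSup_left.mpr fun ν => Submodule.isOrtho_iSup_left.mpr fun hν => ?_).ge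
    (Module.End.mem_eigenspace_iff.mpr hv)
  refine hsym.orthogonalFamily_eigenspaces.isOrtho ?_
  exact_mod_cast ne_of_mem_of_not_mem hν hμ

theorem norm_specProj_le_one (T : V →L[ℂ] V) (I : Set ℝ) : ‖specProj T I‖ ≤ 1 :=
  Submodule.starProjection_norm_le _

theorem isSelfAdjoint_specProj (T : V →L[ℂ] V) (I : Set ℝ) : IsSelfAdjoint (specProj T I) :=
  isSelfAdjoint_starProjection _

theorem IsSelfAdjoint.exists_orthonormalBasis_apply_eq_smul {T : V →L[ℂ] V}
    (hT : IsSelfAdjoint T) :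
    ∃ (b : OrthonormalBasis (Fin (Module.finrank ℂ V)) ℂ V) (μ : Fin (Module.finrank ℂ V) → ℝ),
      ∀ i, T (b i) = (μ i : ℂ) • b i := by
  have hsym := ContinuousLinearMap.isSelfAdjoint_iff_isSymmetric.mp hT
  exact ⟨hsym.eigenvectorBasis rfl, hsym.eigenvalues rfl,
    fun i => by exact_mod_cast hsym.apply_eigenvectorBasis rfl i⟩

theorem specProj_apply_eq_ite {T : V →L[ℂ] V} (hT : IsSelfAdjoint T) (I : Set ℝ) {v : V}
    {μ : ℝ} (hv : T v = (μ : ℂ) • v) [Decidable (μ ∈ I)] :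
    specProj T I v = if μ ∈ I then v else 0 := by
  split_ifs with hμ
  · exact specProj_apply_of_mem hv hμ
  · exact specProj_apply_of_notMem hT hv hμ

theorem commute_specProj {T : V →L[ℂ] V} (hT : IsSelfAdjoint T) (I : Set ℝ) :
    Commute T (specProj T I) := by
  classical
  obtain ⟨b, μ, hb⟩ := hT.exists_orthonormalBasis_apply_eq_smul
  refine b.ext_continuousLinearMap fun i => ?_
  simp only [mul_apply_eq_comp, hb i, map_smul, specProj_apply_eq_ite hT I (hb i)]
  split_ifs <;> simp [hb i]

theorem norm_specProj_mul_mul_specProj_le {K : V →L[ℂ] V} (hK : IsSelfAdjoint K)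
    (A : V →L[ℂ] V) (M' N' : ℝ) {lam : ℝ} (hlam : 0 ≤ lam) :
    ‖specProj K (Ici M') * A * specProj K (Iic N')‖ ≤
      Real.exp (-(lam * (M' - N'))) * ‖exp (lam • K) * A * exp (-(lam • K))‖ := by
  classical
  obtain ⟨b, μ, hb⟩ := hK.exists_orthonormalBasis_apply_eq_smul
  have hlow : ‖specProj K (Ici M') * exp (-(lam • K))‖ ≤ Real.exp (-(lam * M')) := by
    refine b.opNorm_le_of_apply_eq_smul (c := fun i =>
      if μ i ∈ Ici M' then (Real.exp (-(lam * μ i)) : ℂ) else 0) (fun i => ?_)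
      (Real.exp_pos _).le (fun i => ?_)
    · rw [mul_apply_eq_comp, ContinuousLinearMap.exp_neg_smul_apply_of_apply_eq_smul (hb i),
        map_smul, specProj_apply_eq_ite hK _ (hb i)]
      split_ifs <;> simp
    · split_ifs with h
      · rw [Complex.norm_real, Real.norm_of_nonneg (Real.exp_pos _).le, Real.exp_le_exp]
        exact neg_le_neg (mul_le_mul_of_nonneg_left h hlam)
      · simpa using (Real.exp_pos _).le
  have hhigh : ‖exp (lam • K) * specProj K (Iic N')‖ ≤ Real.exp (lam * N') := by
    refine b.opNorm_le_of_apply_eq_smul (c := fun i =>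
      if μ i ∈ Iic N' then (Real.exp (lam * μ i) : ℂ) else 0) (fun i => ?_)
      (Real.exp_pos _).le (fun i => ?_)
    · rw [mul_apply_eq_comp, specProj_apply_eq_ite hK _ (hb i)]
      split_ifs <;> simp [ContinuousLinearMap.exp_smul_apply_of_apply_eq_smul (hb i)]
    · split_ifs with h
      · rw [Complex.norm_real, Real.norm_of_nonneg (Real.exp_pos _).le, Real.exp_le_exp]
        exact mul_le_mul_of_nonneg_left h hlam
      · simpa using (Real.exp_pos _).le
  calc _ ≤ ‖specProj K (Ici M') * exp (-(lam • K))‖ * ‖exp (lam • K) * A * exp (-(lam • K))‖ *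
        ‖exp (lam • K) * specProj K (Iic N')‖ :=
        norm_mul_mul_le_of_mul_eq_one (exp_neg_mul_exp _) _ _ _
    _ ≤ Real.exp (-(lam * M')) * ‖exp (lam • K) * A * exp (-(lam • K))‖ *
        Real.exp (lam * N') := by gcongr
    _ = _ := by rw [mul_right_comm, ← Real.exp_add]; ring_nf

end SpectralProjection

section Truncation

variable {V : Type*} [NormedAddCommGroup V] [InnerProductSpace ℂ V] [FiniteDimensional ℂ V]
  {H' : V →L[ℂ] V} {M : ℝ}

theorem isSelfAdjoint_etrunc (hH' : IsSelfAdjoint H') (M : ℝ) : IsSelfAdjoint (etrunc H' M) :=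
  ((hH'.commute_iff (isSelfAdjoint_specProj _ _)).mp (commute_specProj hH' _)).add
    (IsSelfAdjoint.smul (Complex.conj_ofReal M) (isSelfAdjoint_specProj _ _))

theorem etrunc_apply_of_apply_eq_smul (hH' : IsSelfAdjoint H') {v : V} {μ : ℝ}
    (hv : H' v = (μ : ℂ) • v) (hμ : -M < μ) : etrunc H' M v = ((min μ M : ℝ) : ℂ) • v := by
  rcases lt_or_ge μ M with h | h
  · have hlow : μ ∈ Ioo (-M) M := ⟨hμ, h⟩
    have hhigh : μ ∉ Ici M := not_le.mpr h
    simp [etrunc, mul_apply_eq_comp, specProj_apply_of_mem hv hlow,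
      specProj_apply_of_notMem hH' hv hhigh, hv, min_eq_left h.le]
  · have hlow : μ ∉ Ioo (-M) M := fun h' => not_lt.mpr h h'.2
    have hhigh : μ ∈ Ici M := h
    simp [etrunc, mul_apply_eq_comp, specProj_apply_of_mem hv hhigh,
      specProj_apply_of_notMem hH' hv hlow, min_eq_right h]

variable {ι : Type*} [Fintype ι] {b : OrthonormalBasis ι ℂ V} {μ : ι → ℝ}

theorem exp_neg_smul_etrunc (hH' : IsSelfAdjoint H') (hb : ∀ i, H' (b i) = (μ i : ℂ) • b i)
    (hM : ∀ i, -M < μ i) (s : ℝ) :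
    exp (-(s • etrunc H' M)) = exp (-(s • H')) * specProj H' (Ioo (-M) M) +
      (Real.exp (-(s * M)) : ℂ) • specProj H' (Ici M) := by
  refine b.ext_continuousLinearMap fun i => ?_
  rw [ContinuousLinearMap.exp_neg_smul_apply_of_apply_eq_smul
    (etrunc_apply_of_apply_eq_smul hH' (hb i) (hM i))]
  rcases lt_or_ge (μ i) M with h | h
  · have hlow : μ i ∈ Ioo (-M) M := ⟨hM i, h⟩
    have hhigh : μ i ∉ Ici M := not_le.mpr h
    simp [mul_apply_eq_comp, specProj_apply_of_mem (hb i) hlow,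
      specProj_apply_of_notMem hH' (hb i) hhigh, min_eq_left h.le,
      ContinuousLinearMap.exp_neg_smul_apply_of_apply_eq_smul (hb i)]
  · have hlow : μ i ∉ Ioo (-M) M := fun h' => not_lt.mpr h h'.2
    have hhigh : μ i ∈ Ici M := h
    simp [mul_apply_eq_comp, specProj_apply_of_mem (hb i) hhigh,
      specProj_apply_of_notMem hH' (hb i) hlow, min_eq_right h]

theorem norm_exp_smul_etrunc_mul_exp_neg_smul_le_one (hH' : IsSelfAdjoint H')
    (hb : ∀ i, H' (b i) = (μ i : ℂ) • b i) (hM : ∀ i, -M < μ i) {s : ℝ} (hs : 0 ≤ s) :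
    ‖exp (s • etrunc H' M) * exp (-(s • H'))‖ ≤ 1 := by
  refine b.opNorm_le_of_apply_eq_smul (c := fun i =>
    (Real.exp (s * min (μ i) M - s * μ i) : ℂ)) (fun i => ?_) zero_le_one (fun i => ?_)
  · rw [mul_apply_eq_comp, ContinuousLinearMap.exp_neg_smul_apply_of_apply_eq_smul (hb i),
      map_smul, ContinuousLinearMap.exp_smul_apply_of_apply_eq_smul
        (etrunc_apply_of_apply_eq_smul hH' (hb i) (hM i)), smul_smul, ← Complex.ofReal_mul,
      ← Real.exp_add, sub_eq_neg_add]
  · rw [Complex.norm_real, Real.norm_of_nonneg (Real.exp_pos _).le, Real.exp_le_one_iff,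
      sub_nonpos]
    exact mul_le_mul_of_nonneg_left (min_le_left _ _) hs

theorem norm_exp_smul_etrunc_le (hH' : IsSelfAdjoint H') (hb : ∀ i, H' (b i) = (μ i : ℂ) • b i)
    (hM : ∀ i, -M < μ i) {s : ℝ} (hs : 0 ≤ s) :
    ‖exp (s • etrunc H' M)‖ ≤ Real.exp (s * M) := by
  refine b.opNorm_le_of_apply_eq_smul (c := fun i => (Real.exp (s * min (μ i) M) : ℂ))
    (fun i => ContinuousLinearMap.exp_smul_apply_of_apply_eq_smul
      (etrunc_apply_of_apply_eq_smul hH' (hb i) (hM i)) s) (Real.exp_pos _).le (fun i => ?_)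
  rw [Complex.norm_real, Real.norm_of_nonneg (Real.exp_pos _).le, Real.exp_le_exp]
  exact mul_le_mul_of_nonneg_left (min_le_right _ _) hs

theorem norm_conj_exp_smul_etrunc_le (hH' : IsSelfAdjoint H')
    (hb : ∀ i, H' (b i) = (μ i : ℂ) • b i) (hM : ∀ i, -M < μ i) {s : ℝ} (hs : 0 ≤ s)
    {B : V →L[ℂ] V} {C : ℝ} (hC : ‖exp (s • H') * B * exp (-(s • H'))‖ ≤ C) :
    ‖exp (s • etrunc H' M) * B * exp (-(s • etrunc H' M))‖ ≤ C + ‖B‖ := by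
  set X := etrunc H' M
  have hsplit : exp (s • X) * B * exp (-(s • H')) * specProj H' (Ioo (-M) M) =
      exp (s • X) * exp (-(s • H')) * (exp (s • H') * B * exp (-(s • H'))) *
        specProj H' (Ioo (-M) M) := by
    simp only [mul_assoc, ← mul_assoc (exp (-(s • H'))) (exp (s • H')), exp_neg_mul_exp,
      one_mul]
  have hlow : ‖exp (s • X) * B * exp (-(s • H')) * specProj H' (Ioo (-M) M)‖ ≤ C := by
    rw [hsplit]
    calc _ ≤ ‖exp (s • X) * exp (-(s • H'))‖ * ‖exp (s • H') * B * exp (-(s • H'))‖ *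
          ‖specProj H' (Ioo (-M) M)‖ := norm_mul₃_le
      _ ≤ 1 * C * 1 := by
          have hC0 : 0 ≤ C := (norm_nonneg _).trans hC
          gcongr
          · exact norm_exp_smul_etrunc_mul_exp_neg_smul_le_one hH' hb hM hs
          · exact norm_specProj_le_one _ _
      _ = C := by ring
  have hhigh : ‖(Real.exp (-(s * M)) : ℂ) • (exp (s • X) * B * specProj H' (Ici M))‖ ≤ ‖B‖ := by
    rw [norm_smul, Complex.norm_real, Real.norm_of_nonneg (Real.exp_pos _).le]
    calc _ ≤ Real.exp (-(s * M)) * (Real.exp (s * M) * ‖B‖ * 1) := by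
          gcongr
          refine norm_mul₃_le.trans ?_
          gcongr
          · exact norm_exp_smul_etrunc_le hH' hb hM hs
          · exact norm_specProj_le_one _ _
      _ = ‖B‖ := by rw [mul_one, ← mul_assoc, ← Real.exp_add, neg_add_cancel, Real.exp_zero,
          one_mul]
  rw [exp_neg_smul_etrunc hH' hb hM, mul_add, mul_smul_comm, ← mul_assoc]
  exact (norm_add_le _ _).trans (add_le_add hlow hhigh)

end Truncation

theorem norm_conj_exp_smul_le_of_hadamard {E : Type*} [NormedAddCommGroup E] [NormedSpace ℂ E]
    {H' B : E →L[ℂ] E} {lam : ℝ} (hlam : 0 < lam)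
    (hHad : ∀ s : ℂ, ‖s‖ < 2 * lam →
      ‖exp (s • H') * B * exp (-(s • H'))‖ ≤ ‖B‖ / (1 - ‖s‖ / (2 * lam)))
    {s : ℝ} (hs : s ∈ Icc 0 lam) :
    ‖exp (s • H') * B * exp (-(s • H'))‖ ≤ 2 * ‖B‖ := by
  have hnorm : ‖(s : ℂ)‖ = s := by rw [Complex.norm_real, Real.norm_of_nonneg hs.1]
  have hhalf : s / (2 * lam) ≤ 1 / 2 := by
    rw [div_le_iff₀ (by positivity)]
    linarith [hs.2]
  have hden : 1 / 2 ≤ 1 - s / (2 * lam) := by linarith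
  calc _ = ‖exp ((s : ℂ) • H') * B * exp (-((s : ℂ) • H'))‖ := by rw [Complex.coe_smul]
    _ ≤ ‖B‖ / (1 - s / (2 * lam)) := by
        simpa only [hnorm] using hHad s (by rw [hnorm]; linarith [hs.2])
    _ ≤ ‖B‖ / (1 / 2) := by gcongr
    _ = 2 * ‖B‖ := by ring

theorem norm_specProj_mul_mul_specProj_le_of_conj {V : Type*} [NormedAddCommGroup V]
    [InnerProductSpace ℂ V] [FiniteDimensional ℂ V] {K L : V →L[ℂ] V} (hK : IsSelfAdjoint K)
    (A : V →L[ℂ] V) (M' N' : ℝ) {lam a : ℝ} (hlam : 0 ≤ lam)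
    (hKL : ‖exp (lam • K) * exp (-(lam • L))‖ ≤ a) (hLK : ‖exp (lam • L) * exp (-(lam • K))‖ ≤ a) :
    ‖specProj K (Ici M') * A * specProj K (Iic N')‖ ≤
      Real.exp (-(lam * (M' - N'))) * (a * a) * ‖exp (lam • L) * A * exp (-(lam • L))‖ := by
  have ha : 0 ≤ a := (norm_nonneg _).trans hKL
  calc _ ≤ Real.exp (-(lam * (M' - N'))) * ‖exp (lam • K) * A * exp (-(lam • K))‖ :=
        norm_specProj_mul_mul_specProj_le hK A M' N' hlam
    _ ≤ Real.exp (-(lam * (M' - N'))) * (a * ‖exp (lam • L) * A * exp (-(lam • L))‖ * a) := by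
        gcongr
        exact (norm_mul_mul_le_of_mul_eq_one (exp_neg_mul_exp _) _ _ _).trans (by gcongr)
    _ = _ := by ring

/-- Off-diagonal estimates for the truncated Hamiltonians `H̄' := etrunc H' M`,
`H̄ := H̄' + B`, under the complex Hadamard bound with radius `2λ`. -/
theorem stmt_9 {V : Type*} [NormedAddCommGroup V] [InnerProductSpace ℂ V]
    [FiniteDimensional ℂ V]
    (H' B : V →L[ℂ] V) (hH' : IsSelfAdjoint H') (hB : IsSelfAdjoint B)
    (M : ℝ) (hM : ∀ μ : ℝ, Module.End.HasEigenvalue (↑H' : V →ₗ[ℂ] V) (μ : ℂ) → -M < μ)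
    (lam : ℝ) (hlam : 0 < lam)
    (hHad : ∀ s : ℂ, ‖s‖ < 2 * lam →
      ‖NormedSpace.exp (s • H') * B * NormedSpace.exp (-(s • H'))‖ ≤
        ‖B‖ / (1 - ‖s‖ / (2 * lam))) :
    ∀ (A : V →L[ℂ] V) (M' N' : ℝ),
      ‖specProj (etrunc H' M + B) (Set.Ici M') * A *
          specProj (etrunc H' M + B) (Set.Iic N')‖ ≤
        Real.exp (-lam * (M' - N' - 8 * ‖B‖)) *
          ‖NormedSpace.exp ((lam : ℂ) • etrunc H' M) * A *
              NormedSpace.exp (-((lam : ℂ) • etrunc H' M))‖ ∧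
      ‖specProj (etrunc H' M) (Set.Ici M') * A *
          specProj (etrunc H' M) (Set.Iic N')‖ ≤
        Real.exp (-lam * (M' - N' - 8 * ‖B‖)) *
          ‖NormedSpace.exp ((lam : ℂ) • (etrunc H' M + B)) * A *
              NormedSpace.exp (-((lam : ℂ) • (etrunc H' M + B)))‖ := by
  intro A M' N'
  obtain ⟨b, μ, hb⟩ := hH'.exists_orthonormalBasis_apply_eq_smul
  have hμ : ∀ i, -M < μ i := fun i => hM _ (Module.End.hasEigenvalue_of_hasEigenvector
    ⟨Module.End.mem_eigenspace_iff.mpr (hb i), b.orthonormal.ne_zero i⟩)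
  set X := etrunc H' M
  have hX : IsSelfAdjoint X := isSelfAdjoint_etrunc hH' M
  have hconj : ∀ s ∈ Icc 0 lam, ‖exp (s • X) * B * exp (-(s • X))‖ ≤ 3 * ‖B‖ := fun s hs =>
    (norm_conj_exp_smul_etrunc_le hH' hb hμ hs.1
      (norm_conj_exp_smul_le_of_hadamard hlam hHad hs)).trans_eq (by ring)
  have hXY := norm_exp_smul_mul_exp_neg_smul_add_le ContinuousLinearMap.norm_id_le hlam.le hconj
  have hYX := norm_exp_smul_add_mul_exp_neg_smul_le ContinuousLinearMap.norm_id_le hlam.le hconj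
  have hexp : Real.exp (-(lam * (M' - N'))) *
      (Real.exp (3 * ‖B‖ * lam) * Real.exp (3 * ‖B‖ * lam)) ≤
        Real.exp (-lam * (M' - N' - 8 * ‖B‖)) := by
    rw [← Real.exp_add, ← Real.exp_add, Real.exp_le_exp]
    nlinarith [norm_nonneg B]
  simp only [Complex.coe_smul]
  exact ⟨(norm_specProj_mul_mul_specProj_le_of_conj (hX.add hB) A M' N' hlam.le hYX hXY).trans
      (by gcongr), (norm_specProj_mul_mul_specProj_le_of_conj hX A M' N' hlam.le hXY hYX).trans
      (by gcongr)⟩
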